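/- Let 0 ≤ α < n and let Ω be homogeneous of degree zero and bounded between positive constants c and C on an open subset E ⊂ S^{n-1}. Let Q₁ be a cube with side length ρ, h ∈ ℝⁿ with h/|h| in a suitable cone and |h| large, and Q = Q₁ + ρh. Then for every locally integrable b with ∫_{Q₁} b = 0 and the function φ as above (built from sgn(b) on Q₁), the estimate |∫_{Q₁} Ω(x-y)|x-y|^{α-n} b(y)φ(y) dy| ≥ c' (ρ|h|)^{α-n} ∫_{Q₁} |b| holds for all x ∈ Q, where c' > 0 depends only on c, n, α. -/

import Mathlib

open MeasureTheory
open scoped ENNReal NNReal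

/-!
Let `κ` be the mean of `sgn b` over `Q₁`. Since `|κ| ≤ 1`, the factor `b (sgn b - κ) = |b| - κ b`
is nonnegative, and since `b` has mean zero its integral over `Q₁` is `∫_{Q₁} |b|`. By homogeneity
`Ω (x - y)` is a value of `Ω` on `E`, and `|x - y| ≤ 2ρ|h|` with `α - n ≤ 0`, so the kernel is at
least `c (2ρ|h|)^{α-n}` on `Q₁`; integrating the nonnegative factor against it gives the bound
with `c' = c 2^{α-n}`.
-/

/-- The cube in `ℝⁿ` with center `a` and side length `r`. -/
def cubeC (n : ℕ) (a : EuclideanSpace ℝ (Fin n)) (r : ℝ) : Set (EuclideanSpace ℝ (Fin n)) :=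
  {x | ∀ i, |x i - a i| ≤ r / 2}

theorem isCompact_cubeC (n : ℕ) (a : EuclideanSpace ℝ (Fin n)) (r : ℝ) :
    IsCompact (cubeC n a r) := by
  have hcube : cubeC n a r = EuclideanSpace.equiv (Fin n) ℝ ⁻¹'
      Set.univ.pi fun i => Set.Icc (a i - r / 2) (a i + r / 2) := by
    ext x
    simp only [cubeC, Set.mem_ofPred_eq, Set.mem_preimage, Set.mem_univ_pi, Set.mem_Icc,
      abs_sub_le_iff, sub_le_iff_le_add', sub_le_comm (b := r / 2)]
    exact forall_congr' fun _ => and_comm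
  rw [hcube]
  exact (EuclideanSpace.equiv (Fin n) ℝ).toHomeomorph.isCompact_preimage.2
    (isCompact_univ_pi fun _ => isCompact_Icc)

namespace Real

theorem abs_sign_le_one (t : ℝ) : |sign t| ≤ 1 := by
  rcases sign_apply_eq t with h | h | h <;> simp [h]

theorem mul_sign_eq_abs (t : ℝ) : t * sign t = |t| := by
  rcases lt_trichotomy t 0 with h | rfl | h
  · rw [sign_of_neg h, abs_of_neg h, mul_neg_one]
  · simp
  · rw [sign_of_pos h, abs_of_pos h, mul_one]

theorem mul_sign_sub_eq (t κ : ℝ) : t * (sign t - κ) = |t| - κ * t := by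
  rw [mul_sub, mul_sign_eq_abs, mul_comm]

theorem mul_sign_sub_nonneg (t : ℝ) {κ : ℝ} (hκ : |κ| ≤ 1) : 0 ≤ t * (sign t - κ) := by
  rw [mul_sign_sub_eq, sub_nonneg]
  calc κ * t ≤ |κ| * |t| := abs_mul κ t ▸ le_abs_self _
    _ ≤ |t| := mul_le_of_le_one_left (abs_nonneg t) hκ

end Real

section
variable {X : Type*} [MeasurableSpace X] {μ : Measure X} {s : Set X}

theorem abs_toReal_inv_mul_setIntegral_le {f : X → ℝ} {M : ℝ} (hM : 0 ≤ M)
    (hf : ∀ x ∈ s, |f x| ≤ M) : |(μ s).toReal⁻¹ * ∫ x in s, f x ∂μ| ≤ M := by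
  rcases eq_top_or_lt_top (μ s) with hs | hs
  · simp [hs, hM]
  rcases eq_or_ne (μ s).toReal 0 with h0 | h0
  · simp [h0, hM]
  have hint : ‖∫ x in s, f x ∂μ‖ ≤ M * μ.real s :=
    norm_setIntegral_le_of_norm_le_const hs hf
  rw [abs_mul, abs_inv, ENNReal.abs_toReal, inv_mul_le_iff₀ (by positivity), mul_comm]
  exact hint

theorem setIntegral_mul_sign_sub_eq {b : X → ℝ} (hb : IntegrableOn b s μ)
    (hb0 : ∫ y in s, b y ∂μ = 0) (κ : ℝ) :
    ∫ y in s, b y * (Real.sign (b y) - κ) ∂μ = ∫ y in s, |b y| ∂μ := by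
  simp_rw [Real.mul_sign_sub_eq]
  rw [integral_sub hb.abs (hb.const_mul κ), integral_const_mul, hb0, mul_zero, sub_zero]

theorem mul_setIntegral_le_setIntegral_mul (hs : MeasurableSet s) {K g : X → ℝ} {m M : ℝ}
    (hm : 0 ≤ m) (hKm : AEStronglyMeasurable K (μ.restrict s))
    (hK : ∀ y ∈ s, K y ∈ Set.Icc m M) (hg : IntegrableOn g s μ) (hg0 : ∀ y ∈ s, 0 ≤ g y) :
    m * ∫ y in s, g y ∂μ ≤ ∫ y in s, K y * g y ∂μ := by
  have hKg : IntegrableOn (fun y => K y * g y) s μ := by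
    refine hg.bdd_mul hKm (c := M) ?_
    filter_upwards [ae_restrict_mem hs] with y hy
    rw [Real.norm_eq_abs, abs_of_nonneg (hm.trans (hK y hy).1)]
    exact (hK y hy).2
  rw [← integral_const_mul]
  exact setIntegral_mono_on (hg.const_mul m) hKg hs fun y hy =>
    mul_le_mul_of_nonneg_right (hK y hy).1 (hg0 y hy)

end

theorem mul_rpow_mem_Icc {a A w R r p : ℝ} (hp : p ≤ 0) (ha : 0 ≤ a) (hw : w ∈ Set.Icc a A)
    (hR : 0 < R) (hr : r ∈ Set.Icc (R / 2) (2 * R)) :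
    w * r ^ p ∈ Set.Icc (a * (2 * R) ^ p) (A * (R / 2) ^ p) := by
  have hr0 : 0 < r := lt_of_lt_of_le (by positivity) hr.1
  constructor
  · exact mul_le_mul hw.1 (Real.rpow_le_rpow_of_nonpos hr0 hr.2 hp) (by positivity)
      (ha.trans hw.1)
  · exact mul_le_mul hw.2 (Real.rpow_le_rpow_of_nonpos (by positivity) hr.1 hp)
      (by positivity) ((ha.trans hw.1).trans hw.2)

theorem stmt_15_general {n : ℕ} (α c C : ℝ)
    (hαn : α < n) (hc : 0 < c) :
    ∃ c' : ℝ, 0 < c' ∧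
      ∀ (Ω : EuclideanSpace ℝ (Fin n) → ℝ) (E U : Set (EuclideanSpace ℝ (Fin n))),
        Measurable Ω →
        IsOpen U → E = U ∩ Metric.sphere (0 : EuclideanSpace ℝ (Fin n)) 1 →
        (∀ t : ℝ, 0 < t → ∀ x : EuclideanSpace ℝ (Fin n), x ≠ 0 → Ω (t • x) = Ω x) →
        (∀ z ∈ E, c ≤ Ω z ∧ Ω z ≤ C) →
        ∀ (c₁ h : EuclideanSpace ℝ (Fin n)) (ρ : ℝ) (b : EuclideanSpace ℝ (Fin n) → ℝ),
          0 < ρ → 0 < ‖h‖ →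
          LocallyIntegrable b volume →
          (∫ y in cubeC n c₁ ρ, b y) = 0 →
          (∀ x ∈ cubeC n (c₁ + ρ • h) ρ, ∀ y ∈ cubeC n c₁ ρ,
            x - y ≠ 0 ∧ (‖x - y‖⁻¹) • (x - y) ∈ E ∧
            ρ * ‖h‖ / 2 ≤ ‖x - y‖ ∧ ‖x - y‖ ≤ 2 * (ρ * ‖h‖)) →
          ∀ x ∈ cubeC n (c₁ + ρ • h) ρ,
            c' * (ρ * ‖h‖) ^ (α - (n : ℝ)) * (∫ y in cubeC n c₁ ρ, |b y|) ≤
              |∫ y in cubeC n c₁ ρ, Ω (x - y) * ‖x - y‖ ^ (α - (n : ℝ)) *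
                (b y * ((Real.sign (b y) -
                  (volume (cubeC n c₁ ρ)).toReal⁻¹ *
                    ∫ z in cubeC n c₁ ρ, Real.sign (b z))))| := by
  have hp : α - n ≤ 0 := by linarith
  refine ⟨c * 2 ^ (α - n), by positivity, ?_⟩
  intro Ω E U hΩ _ _ hhom hbound c₁ h ρ b hρ hh hb hb0 hgeo x hx
  set Q₁ := cubeC n c₁ ρ
  have hQ₁ : IsCompact Q₁ := isCompact_cubeC n c₁ ρ
  have hbQ₁ : IntegrableOn b Q₁ := hb.integrableOn_isCompact hQ₁
  set κ := (volume Q₁).toReal⁻¹ * ∫ z in Q₁, Real.sign (b z)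
  have hκ : |κ| ≤ 1 :=
    abs_toReal_inv_mul_setIntegral_le zero_le_one fun z _ => Real.abs_sign_le_one (b z)
  have hK : ∀ y ∈ Q₁, Ω (x - y) * ‖x - y‖ ^ (α - n) ∈
      Set.Icc (c * 2 ^ (α - n) * (ρ * ‖h‖) ^ (α - n)) (C * (ρ * ‖h‖ / 2) ^ (α - n)) := by
    intro y hy
    obtain ⟨hne, hE, hlow, hupp⟩ := hgeo x hx y hy
    rw [mul_assoc, ← Real.mul_rpow zero_le_two (by positivity)]
    refine mul_rpow_mem_Icc hp hc.le ?_ (by positivity) ⟨hlow, hupp⟩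
    rw [← hhom _ (inv_pos.2 (norm_pos_iff.2 hne)) _ hne]
    exact hbound _ hE
  have hg : IntegrableOn (fun y => b y * (Real.sign (b y) - κ)) Q₁ := by
    simp_rw [Real.mul_sign_sub_eq]
    exact hbQ₁.abs.sub (hbQ₁.const_mul κ)
  calc c * 2 ^ (α - n) * (ρ * ‖h‖) ^ (α - n) * ∫ y in Q₁, |b y|
      = c * 2 ^ (α - n) * (ρ * ‖h‖) ^ (α - n) * ∫ y in Q₁, b y * (Real.sign (b y) - κ) := by
        rw [setIntegral_mul_sign_sub_eq hbQ₁ hb0]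
    _ ≤ ∫ y in Q₁, Ω (x - y) * ‖x - y‖ ^ (α - n) * (b y * (Real.sign (b y) - κ)) :=
        mul_setIntegral_le_setIntegral_mul hQ₁.measurableSet (by positivity)
          (by fun_prop) hK hg fun y _ => Real.mul_sign_sub_nonneg (b y) hκ
    _ ≤ _ := le_abs_self _

/-- Let `0 ≤ α < n` and `Ω` homogeneous of degree zero, bounded between `0 < c < C` on an
open subset `E` of the unit sphere.  Let `Q₁` be a cube of side `ρ`, `h ∈ ℝⁿ`,
`Q = Q₁ + ρh`, and suppose that for all `x ∈ Q`, `y ∈ Q₁` the direction `(x-y)/|x-y|`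
lies in `E` and `|x-y| ≈ ρ|h|`.  Then for every locally integrable `b` with
`∫_{Q₁} b = 0` and `φ` built from `sgn(b)` on `Q₁`,
`|∫_{Q₁} Ω(x-y)|x-y|^{α-n} b(y)φ(y) dy| ≥ c' (ρ|h|)^{α-n} ∫_{Q₁} |b|` for all `x ∈ Q`,
with `c' > 0` depending only on `c, n, α`. -/
theorem stmt_15 {n : ℕ} (hn : 0 < n) (α c C : ℝ)
    (hα0 : 0 ≤ α) (hαn : α < n) (hc : 0 < c) (hcC : c < C) :
    ∃ c' : ℝ, 0 < c' ∧
      ∀ (Ω : EuclideanSpace ℝ (Fin n) → ℝ) (E U : Set (EuclideanSpace ℝ (Fin n))),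
        Measurable Ω →
        IsOpen U → E = U ∩ Metric.sphere (0 : EuclideanSpace ℝ (Fin n)) 1 →
        (∀ t : ℝ, 0 < t → ∀ x : EuclideanSpace ℝ (Fin n), x ≠ 0 → Ω (t • x) = Ω x) →
        (∀ z ∈ E, c ≤ Ω z ∧ Ω z ≤ C) →
        ∀ (c₁ h : EuclideanSpace ℝ (Fin n)) (ρ : ℝ) (b : EuclideanSpace ℝ (Fin n) → ℝ),
          0 < ρ → 0 < ‖h‖ →
          LocallyIntegrable b volume →
          (∫ y in cubeC n c₁ ρ, b y) = 0 →
          (∀ x ∈ cubeC n (c₁ + ρ • h) ρ, ∀ y ∈ cubeC n c₁ ρ,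
            x - y ≠ 0 ∧ (‖x - y‖⁻¹) • (x - y) ∈ E ∧
            ρ * ‖h‖ / 2 ≤ ‖x - y‖ ∧ ‖x - y‖ ≤ 2 * (ρ * ‖h‖)) →
          ∀ x ∈ cubeC n (c₁ + ρ • h) ρ,
            c' * (ρ * ‖h‖) ^ (α - (n : ℝ)) * (∫ y in cubeC n c₁ ρ, |b y|) ≤
              |∫ y in cubeC n c₁ ρ, Ω (x - y) * ‖x - y‖ ^ (α - (n : ℝ)) *
                (b y * ((Real.sign (b y) -
                  (volume (cubeC n c₁ ρ)).toReal⁻¹ *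
                    ∫ z in cubeC n c₁ ρ, Real.sign (b z))))| :=
  stmt_15_general α c C hαn hc
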